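/- arXiv:1502.02723 — 2 statements merged into one kernel-verified Lean document; each statement's English description precedes it below -/
import Mathlib

section
/- There is an isometry of lattices U ⊕ U(2) ⊕ E_8(-1) ≅ U ⊕ U ⊕ D_8(-1). -/
open Matrix

/-- The hyperbolic plane `U`. -/
def U : Matrix (Fin 2) (Fin 2) ℤ := !![0, 1; 1, 0]

/-- The hyperbolic plane rescaled by 2, `U(2)`. -/
def U2 : Matrix (Fin 2) (Fin 2) ℤ := !![0, 2; 2, 0]

/-- A Gram matrix of the positive definite even unimodular lattice `E₈`. -/
def E8 : Matrix (Fin 8) (Fin 8) ℤ :=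
  !![ 2, -1,  0,  0,  0,  0,  0,  0;
     -1,  2, -1,  0,  0,  0,  0,  0;
      0, -1,  2, -1,  0,  0,  0, -1;
      0,  0, -1,  2, -1,  0,  0,  0;
      0,  0,  0, -1,  2, -1,  0,  0;
      0,  0,  0,  0, -1,  2, -1,  0;
      0,  0,  0,  0,  0, -1,  2,  0;
      0,  0, -1,  0,  0,  0,  0,  2]

/-- A Gram matrix of the positive definite even lattice `D₈`. -/
def D8 : Matrix (Fin 8) (Fin 8) ℤ :=
  !![ 2, -1,  0,  0,  0,  0,  0,  0;
     -1,  2, -1,  0,  0,  0,  0,  0;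
      0, -1,  2, -1,  0,  0,  0,  0;
      0,  0, -1,  2, -1,  0,  0,  0;
      0,  0,  0, -1,  2, -1,  0,  0;
      0,  0,  0,  0, -1,  2, -1, -1;
      0,  0,  0,  0,  0, -1,  2,  0;
      0,  0,  0,  0,  0, -1,  0,  2]

/-- Index type for rank 12 lattices built from blocks of ranks 2, 2, 8. -/
abbrev I12 : Type := Fin 2 ⊕ (Fin 2 ⊕ Fin 8)

/-- Gram matrix of `N = U ⊕ U(2) ⊕ E₈(-2)`. -/
def GN : Matrix I12 I12 ℤ :=
  Matrix.fromBlocks U 0 0 (Matrix.fromBlocks U2 0 0 ((-2 : ℤ) • E8))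

/-- The bilinear form associated to a Gram matrix. -/
def form {m : Type} [Fintype m] (G : Matrix m m ℤ) (x y : m → ℤ) : ℤ :=
  x ⬝ᵥ G.mulVec y

/-- Gram matrix of `U ⊕ U(2) ⊕ E₈(-1)`. -/
def G1 : Matrix I12 I12 ℤ := Matrix.fromBlocks U 0 0 (Matrix.fromBlocks U2 0 0 (-E8))

/-- Gram matrix of `U ⊕ U ⊕ D₈(-1)`. -/
def G2 : Matrix I12 I12 ℤ := Matrix.fromBlocks U 0 0 (Matrix.fromBlocks U 0 0 (-D8))

def P12 : Matrix (Fin 12) (Fin 12) ℤ :=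
  !![1, 0, 0, 0, 0, 0, 0, 0, 0, 0, 0, 0;
     0, 1, 0, 0, 0, 0, 0, 0, 0, 0, 0, 0;
     0, 0, 1, 12, 4, -2, -2, 0, 0, 2, 1, -4;
     0, 0, 1, 12, 4, -2, -1, -1, 0, 2, 1, -4;
     0, 0, 1, 12, 3, -3, -1, -1, 0, 3, 0, -4;
     0, 0, 0, -1, -2, -2, 1, -1, 0, 1, -1, 1;
     0, 0, 1, 12, 1, -5, 0, -2, 0, 3, 1, -3;
     0, 0, 0, 1, -3, -2, 1, -1, 0, 1, 0, 0;
     0, 0, 0, -2, -3, -1, 1, -1, 0, 1, 0, 0;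
     0, 0, 0, -2, -2, -1, 1, -1, 1, 0, 0, 0;
     0, 0, 0, -2, -1, -1, 1, 0, 0, 0, 0, 0;
     0, 0, 0, 2, -1, -2, 1, -1, 0, 1, 0, 0]

def Q12 : Matrix (Fin 12) (Fin 12) ℤ :=
  !![1, 0, 0, 0, 0, 0, 0, 0, 0, 0, 0, 0;
     0, 1, 0, 0, 0, 0, 0, 0, 0, 0, 0, 0;
     0, 0, 24, 24, -25, 26, -22, 8, 3, 0, 2, 8;
     0, 0, 2, 2, -2, 2, -2, 1, 0, 0, 0, 1;
     0, 0, -1, -1, 1, -1, 1, -1, 0, 0, 0, 0;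
     0, 0, 6, 6, -6, 6, -6, 2, 1, 0, 0, 3;
     0, 0, 9, 9, -9, 9, -9, 3, 1, 0, 1, 5;
     0, 0, 10, 8, -9, 9, -9, 3, 1, 0, 1, 5;
     0, 0, 9, 7, -8, 8, -8, 2, 1, 1, 0, 5;
     0, 0, 8, 6, -7, 7, -7, 1, 2, 0, 0, 5;
     0, 0, 3, 2, -3, 2, -2, 0, 1, 0, 0, 2;
     0, 0, 8, 7, -8, 8, -7, 2, 1, 0, 0, 4]

def e12 : I12 ≃ Fin 12 :=
  (Equiv.sumCongr (Equiv.refl (Fin 2)) finSumFinEquiv).trans finSumFinEquiv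

/-- There is an isometry of lattices `U ⊕ U(2) ⊕ E₈(-1) ≅ U ⊕ U ⊕ D₈(-1)`. -/
theorem isometry_UU2E8_2UD8 :
    ∃ P : Matrix I12 I12 ℤ, IsUnit P.det ∧ Pᵀ * G1 * P = G2 := by
  refine ⟨P12.submatrix e12 e12, ?_, ?_⟩
  · exact Matrix.isUnit_det_of_right_inverse (B := Q12.submatrix e12 e12) (by decide)
  · decide
end

section
/- Under the isometry N^∨(2) ≅ U ⊕ U ⊕ D_8(-1), primitive vectors r ∈ N with (r,r) = -2 correspond to primitive vectors s in U ⊕ U ⊕ D_8(-1) with (s,s) = -4 and (s, t) even for all t (i.e. div(s) = 2), and conversely. -/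
open Matrix

/-- Gram matrix of `U ⊕ U ⊕ D₈(-1)`. -/
def G2UD8 : Matrix I12 I12 ℤ := Matrix.fromBlocks U 0 0 (Matrix.fromBlocks U 0 0 (-D8))

/-- Primitivity of an integral vector. -/
def Primitive {m : Type} (v : m → ℤ) : Prop :=
  ∀ (k : ℤ) (w : m → ℤ), v = k • w → IsUnit k

/- ######### auxiliary explicit matrices ######### -/

def Amat : Matrix (Fin 12) (Fin 12) ℤ :=
  !![0, 2, 0, 0, 0, 0, 0, 0, 0, 0, 0, 0;
     2, 0, 0, 0, 0, 0, 0, 0, 0, 0, 0, 0;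
     0, 0, 0, 1, 0, 0, 0, 0, 0, 0, 0, 0;
     0, 0, 1, 0, 0, 0, 0, 0, 0, 0, 0, 0;
     0, 0, 0, 0, -4, -7, -10, -8, -6, -4, -2, -5;
     0, 0, 0, 0, -7, -14, -20, -16, -12, -8, -4, -10;
     0, 0, 0, 0, -10, -20, -30, -24, -18, -12, -6, -15;
     0, 0, 0, 0, -8, -16, -24, -20, -15, -10, -5, -12;
     0, 0, 0, 0, -6, -12, -18, -15, -12, -8, -4, -9;
     0, 0, 0, 0, -4, -8, -12, -10, -8, -6, -3, -6;
     0, 0, 0, 0, -2, -4, -6, -5, -4, -3, -2, -3;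
     0, 0, 0, 0, -5, -10, -15, -12, -9, -6, -3, -8]

def Pmat : Matrix (Fin 12) (Fin 12) ℤ :=
  !![1, 1, 0, 0, 1, 0, -1, 1, -1, 0, 1, 0;
     1, 1, 0, 0, 0, 0, -1, 1, -1, 0, 1, 0;
     0, 0, 1, 0, 0, 0, 0, 0, 0, 0, 0, 0;
     0, 0, 0, 1, 0, 0, 0, 0, 0, 0, 0, 0;
     2, 2, 0, 0, 1, 0, -2, 3, -3, 0, 2, 0;
     -2, -1, 0, 0, -1, 0, 2, -2, 1, 1, -2, 0;
     2, 1, 0, 0, 1, 0, -2, 1, -1, 0, 2, 0;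
     -1, -2, 0, 0, -1, 0, 2, -1, 1, 0, -2, 0;
     0, 1, 0, 0, 0, 1, -1, 0, 0, -1, 1, 1;
     0, 0, 0, 0, 0, -1, 0, 1, 0, 0, 0, 0;
     0, 0, 0, 0, 0, 0, 1, -1, 0, 0, 1, -1;
     -1, 0, 0, 0, 0, 0, 0, 0, 1, 0, -1, -1]

def Qmat : Matrix (Fin 12) (Fin 12) ℤ :=
  !![2, 2, 0, 0, -1, 0, 0, 1, 0, 0, 0, 0;
     2, 2, 0, 0, -1, 0, -1, 0, 0, 0, 0, 0;
     0, 0, 1, 0, 0, 0, 0, 0, 0, 0, 0, 0;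
     0, 0, 0, 1, 0, 0, 0, 0, 0, 0, 0, 0;
     1, -1, 0, 0, 0, 0, 0, 0, 0, 0, 0, 0;
     2, 0, 0, 0, 1, 3, 4, 4, 3, 2, 1, 2;
     3, 1, 0, 0, 0, 2, 2, 3, 2, 2, 1, 1;
     2, 0, 0, 0, 1, 3, 4, 4, 3, 3, 1, 2;
     3, 1, 0, 0, 0, 3, 4, 4, 3, 3, 1, 2;
     2, 0, 0, 0, 1, 4, 5, 4, 3, 3, 1, 2;
     0, -1, 0, 0, 1, 2, 3, 2, 2, 2, 1, 1;
     1, 0, 0, 0, 0, 1, 1, 1, 1, 1, 0, 0]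

def Lmat : Matrix (Fin 12) (Fin 12) ℤ :=
  !![0, 0, 0, 0, 0, 0, 0, 0, 0, 0, 0, 0;
     1, 0, 0, 0, 0, 0, 0, 0, 0, 0, 0, 0;
     0, 0, 0, 0, 0, 0, 0, 0, 0, 0, 0, 0;
     0, 0, 1, 0, 0, 0, 0, 0, 0, 0, 0, 0;
     0, 0, 0, 0, -1, 0, 0, 0, 0, 0, 0, 0;
     0, 0, 0, 0, 1, -1, 0, 0, 0, 0, 0, 0;
     0, 0, 0, 0, 0, 1, -1, 0, 0, 0, 0, 0;
     0, 0, 0, 0, 0, 0, 1, -1, 0, 0, 0, 0;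
     0, 0, 0, 0, 0, 0, 0, 1, -1, 0, 0, 0;
     0, 0, 0, 0, 0, 0, 0, 0, 1, -1, 0, 0;
     0, 0, 0, 0, 0, 0, 0, 0, 0, 1, -1, 0;
     0, 0, 0, 0, 0, 0, 0, 0, 0, 1, 0, -1]

def ι12 : I12 → Fin 12 :=
  Sum.elim (fun i => ⟨i.1, by omega⟩)
    (Sum.elim (fun i => ⟨i.1 + 2, by omega⟩) (fun i => ⟨i.1 + 4, by omega⟩))

def rd (M : Matrix (Fin 12) (Fin 12) ℤ) : Matrix I12 I12 ℤ := fun i j => M (ι12 i) (ι12 j)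

def bA : Matrix I12 I12 ℤ := rd Amat
def bP : Matrix I12 I12 ℤ := rd Pmat
def bQ : Matrix I12 I12 ℤ := rd Qmat
def bL : Matrix I12 I12 ℤ := rd Lmat

/- ######### decidable matrix identities ######### -/

theorem hGA : GN * bA = 2 := by decide
theorem hAG : bA * GN = 2 := by decide
theorem hPAP : bPᵀ * (bA * bP) = G2UD8 := by decide
theorem hPQ : bP * bQ = 1 := by decide
theorem hQP : bQ * bP = 1 := by decide
theorem hLL : bL + bLᵀ = G2UD8 := by decide
theorem hGNsym : GNᵀ = GN := by decide
theorem hGsym : G2UD8ᵀ = G2UD8 := by decide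
theorem hkey : GN * (bQᵀ * G2UD8) = (2 : ℤ) • bP := by decide
theorem hVV : (bA * bP)ᵀ * (GN * (bA * bP)) = (2 : ℤ) • G2UD8 := by decide

/- ######### helper lemmas ######### -/

theorem two_smul_mat : (2 : Matrix I12 I12 ℤ) = (2 : ℤ) • (1 : Matrix I12 I12 ℤ) := by
  rw [two_smul, one_add_one_eq_two]

theorem dp_transpose (M : Matrix I12 I12 ℤ) (x y : I12 → ℤ) :
    x ⬝ᵥ Mᵀ *ᵥ y = (M *ᵥ x) ⬝ᵥ y := by
  rw [Matrix.dotProduct_mulVec, Matrix.vecMul_transpose]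

theorem form_eq (t u : I12 → ℤ) :
    form G2UD8 t u = (bP *ᵥ t) ⬝ᵥ (bA *ᵥ (bP *ᵥ u)) := by
  show t ⬝ᵥ G2UD8 *ᵥ u = _
  rw [← hPAP, ← Matrix.mulVec_mulVec, dp_transpose, Matrix.mulVec_mulVec]

theorem mv_AGN (v : I12 → ℤ) : bA *ᵥ (GN *ᵥ v) = (2 : ℤ) • v := by
  rw [Matrix.mulVec_mulVec, hAG, two_smul_mat, Matrix.smul_mulVec, Matrix.one_mulVec]

theorem mv_GNA (v : I12 → ℤ) : GN *ᵥ (bA *ᵥ v) = (2 : ℤ) • v := by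
  rw [Matrix.mulVec_mulVec, hGA, two_smul_mat, Matrix.smul_mulVec, Matrix.one_mulVec]

theorem even_form_diag (x : I12 → ℤ) : Even (form G2UD8 x x) := by
  refine ⟨x ⬝ᵥ bL *ᵥ x, ?_⟩
  show x ⬝ᵥ G2UD8 *ᵥ x = _
  rw [← hLL, Matrix.add_mulVec, dotProduct_add, dp_transpose, dotProduct_comm]

theorem dp_GN_left (r w : I12 → ℤ) : (GN *ᵥ r) ⬝ᵥ w = r ⬝ᵥ (GN *ᵥ w) := by
  conv_rhs => rw [← hGNsym]
  rw [dp_transpose]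

/- ######### the theorem ######### -/

theorem hPdet : IsUnit bP.det :=
  letI : Invertible bP := invertibleOfRightInverse bP bQ hPQ
  Matrix.isUnit_det_of_invertible bP

/-- Under the isometry `N^∨(2) ≅ U ⊕ U ⊕ D₈(-1)` (given by an integral
unimodular base change `P` from `U ⊕ U ⊕ D₈(-1)` to the dual basis of `N`, in
which `r ∈ N` has coordinates `GN·r`), primitive vectors `r ∈ N` with
`(r,r) = -2` correspond exactly to primitive vectors `s` with `(s,s) = -4`
pairing evenly with every vector (i.e. `div(s) = 2`), and conversely every such
`s` arises from some `r ∈ N`. -/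
theorem minus_two_correspond_even_minus_four :
    ∃ P : Matrix I12 I12 ℤ, IsUnit P.det ∧
      (P.map (Int.cast : ℤ → ℚ))ᵀ * ((2 : ℚ) • (GN.map (Int.cast : ℤ → ℚ))⁻¹) *
        (P.map (Int.cast : ℤ → ℚ)) = G2UD8.map (Int.cast : ℤ → ℚ) ∧
      (∀ r s : I12 → ℤ, P.mulVec s = GN.mulVec r →
        ((Primitive r ∧ form GN r r = -2) ↔
          (Primitive s ∧ form G2UD8 s s = -4 ∧ ∀ t : I12 → ℤ, Even (form G2UD8 s t)))) ∧
      (∀ s : I12 → ℤ, (∀ t : I12 → ℤ, Even (form G2UD8 s t)) →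
        ∃ r : I12 → ℤ, P.mulVec s = GN.mulVec r) := by
  refine ⟨bP, ?_, ?_, ?_, ?_⟩
  · exact hPdet
  · -- rational identity
    have hmap : ∀ M N : Matrix I12 I12 ℤ,
        (M * N).map (Int.cast : ℤ → ℚ) = M.map (Int.cast : ℤ → ℚ) * N.map (Int.cast : ℤ → ℚ) :=
      fun M N => Matrix.map_mul (f := Int.castRingHom ℚ)
    have h2 : (GN * bA).map (Int.cast : ℤ → ℚ) = (2 : Matrix I12 I12 ℚ) := by
      rw [hGA]
      have := map_ofNat ((Int.castRingHom ℚ).mapMatrix (m := I12)) 2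
      simpa [RingHom.mapMatrix_apply] using this
    have h1 : GN.map (Int.cast : ℤ → ℚ) * ((2 : ℚ)⁻¹ • bA.map (Int.cast : ℤ → ℚ)) = 1 := by
      rw [mul_smul_comm, ← hmap, h2]
      rw [show (2 : Matrix I12 I12 ℚ) = (2 : ℚ) • (1 : Matrix I12 I12 ℚ) by
        rw [two_smul, one_add_one_eq_two]]
      rw [smul_smul]
      norm_num
    have hinv : (GN.map (Int.cast : ℤ → ℚ))⁻¹ = (2 : ℚ)⁻¹ • bA.map (Int.cast : ℤ → ℚ) :=
      Matrix.inv_eq_right_inv h1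
    rw [hinv, smul_smul]
    norm_num
    rw [← Matrix.transpose_map, ← hmap, ← hmap, Matrix.mul_assoc, hPAP]
  · -- correspondence
    intro r s hrs
    have F3 : ∀ t : I12 → ℤ, form G2UD8 s t = 2 * (r ⬝ᵥ (bP *ᵥ t)) := by
      intro t
      rw [form_eq, hrs, dp_GN_left, mv_GNA, dotProduct_smul, smul_eq_mul]
    have F4 : form G2UD8 s s = 2 * form GN r r := by
      rw [F3 s, hrs]; rfl
    constructor
    · rintro ⟨hr, hform⟩
      refine ⟨?_, ?_, ?_⟩
      · -- Primitive s
        intro k w hkw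
        have h2r : (2 : ℤ) • r = k • (bA *ᵥ (bP *ᵥ w)) := by
          rw [← mv_AGN r, ← hrs, hkw, Matrix.mulVec_smul, Matrix.mulVec_smul]
        set v : I12 → ℤ := bA *ᵥ (bP *ᵥ w) with hv
        rcases Int.even_or_odd k with ⟨m, hm⟩ | hk
        · -- k even : contradiction with (r,r) = -2
          exfalso
          have hrv : r = m • v := by
            have h' : (2 : ℤ) • r = (2 : ℤ) • (m • v) := by
              rw [h2r, hm]; module
            exact smul_right_injective (I12 → ℤ) two_ne_zero h'
          obtain ⟨c, hc⟩ := even_form_diag w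
          have hvv : v ⬝ᵥ GN *ᵥ v = 2 * form G2UD8 w w := by
            have : v = (bA * bP) *ᵥ w := by rw [hv, Matrix.mulVec_mulVec]
            rw [this, Matrix.mulVec_mulVec, ← Matrix.mul_assoc, Matrix.mul_assoc,
              ← dp_transpose, Matrix.mulVec_mulVec, hVV, Matrix.smul_mulVec,
              dotProduct_smul, smul_eq_mul]
            rfl
          have hfr : form GN r r = m * (m * (v ⬝ᵥ GN *ᵥ v)) := by
            show r ⬝ᵥ GN *ᵥ r = _
            rw [hrv, Matrix.mulVec_smul, smul_dotProduct, dotProduct_smul,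
              smul_eq_mul, smul_eq_mul]
          have h4 : (-2 : ℤ) = 4 * (m * m * c) := by
            rw [← hform, hfr, hvv, hc]; ring
          have hd : (4 : ℤ) ∣ -2 := ⟨m * m * c, h4⟩
          norm_num at hd
        · -- k odd
          obtain ⟨m, hm⟩ := hk
          have hev : ∀ i, Even (v i) := by
            intro i
            have h2 : 2 * r i = k * v i := by
              have := congrFun h2r i
              simpa [Pi.smul_apply, smul_eq_mul] using this
            have hkv : Even (k * v i) := ⟨r i, by linarith⟩
            rcases Int.even_mul.mp hkv with h | h
            · exact absurd h (by simp [hm, Int.even_add_one, Int.even_mul])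
            · exact h
          choose c hc using fun i => hev i
          apply hr k c
          funext i
          have h2 : 2 * r i = k * v i := by
            have := congrFun h2r i
            simpa [Pi.smul_apply, smul_eq_mul] using this
          have h3 : 2 * r i = 2 * (k * c i) := by rw [h2, hc i]; ring
          have := mul_left_cancel₀ (two_ne_zero : (2 : ℤ) ≠ 0) h3
          simpa [Pi.smul_apply, smul_eq_mul] using this
      · rw [F4, hform]; norm_num
      · intro t
        exact ⟨r ⬝ᵥ (bP *ᵥ t), by rw [F3 t]; ring⟩
    · rintro ⟨hs, hform, -⟩
      constructor
      · intro k w hkw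
        apply hs k (bQ *ᵥ (GN *ᵥ w))
        have : s = bQ *ᵥ (bP *ᵥ s) := by
          rw [Matrix.mulVec_mulVec, hQP, Matrix.one_mulVec]
        rw [this, hrs, hkw, Matrix.mulVec_smul, Matrix.mulVec_smul]
      · have := F4
        rw [hform] at this
        linarith
  · -- surjectivity
    intro s hs
    have hv : ∀ j : I12, ∃ c : ℤ, (G2UD8 *ᵥ s) j = c + c := by
      intro j
      obtain ⟨c, hc⟩ := hs (Pi.single j 1)
      refine ⟨c, ?_⟩
      rw [← hc]
      show (G2UD8 *ᵥ s) j = s ⬝ᵥ G2UD8 *ᵥ Pi.single j 1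
      rw [Matrix.dotProduct_mulVec, ← Matrix.mulVec_transpose, hGsym, dotProduct_single, mul_one]
    choose u hu using hv
    refine ⟨bQᵀ *ᵥ u, ?_⟩
    have h2u : (2 : ℤ) • u = G2UD8 *ᵥ s := by
      funext j
      have := hu j
      simp [Pi.smul_apply, smul_eq_mul, this, two_mul]
    have h2 : (2 : ℤ) • (bP *ᵥ s) = (2 : ℤ) • (GN *ᵥ (bQᵀ *ᵥ u)) := by
      conv_rhs => rw [← Matrix.mulVec_smul, ← Matrix.mulVec_smul, h2u]
      rw [Matrix.mulVec_mulVec, Matrix.mulVec_mulVec]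
      rw [show GN * bQᵀ * G2UD8 = GN * (bQᵀ * G2UD8) from Matrix.mul_assoc _ _ _, hkey,
        Matrix.smul_mulVec]
    exact smul_right_injective (I12 → ℤ) two_ne_zero h2
end
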